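/- arXiv:2010.14815 — 2 statements merged into one kernel-verified Lean document; each statement's English description precedes it below -/
import Mathlib

section
/- Let T be a finite tree with vertex set V_T, Wiener index W_T and mean first-passage time F̄_T. Then 2·W_T = |V_T|·F̄_T; equivalently, the sum of the first-passage times F_{u→v} over all ordered pairs of distinct vertices (u,v) of T equals 2(|V_T| − 1)·W_T. -/
set_option autoImplicit false

/-- `H` is the matrix of first-passage times (expected hitting times) of the simple
random walk on `G`: `H u v` is the expected number of steps for the walk started at `u`
to first reach `v`. -/
def IsHittingTime {V : Type*} [Fintype V] [DecidableEq V] (G : SimpleGraph V)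
    [DecidableRel G.Adj] (H : V → V → ℝ) : Prop :=
  (∀ v, H v v = 0) ∧
  ∀ u v, u ≠ v →
    (G.degree u : ℝ) * H u v = (G.degree u : ℝ) + ∑ w ∈ G.neighborFinset u, H w v

/-- The Wiener index of `G`: the sum of the shortest-path distances over all
unordered pairs of vertices. -/
noncomputable def wienerIndex {V : Type*} [Fintype V] (G : SimpleGraph V) : ℝ :=
  (∑ u : V, ∑ v : V, (G.dist u v : ℝ)) / 2

/-!
In a tree, for `u ≠ v` exactly one neighbour of `u` is closer to `v` than `u` is, so the graph
Laplacian of `d(v, ·)` is `2 - deg - 2 δ_v`. Consequently, with `D x = ∑ w, deg w * d(w, x)`,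
`H u v = (|V| - 1) d(u, v) + (D v - D u) / 2` solves the first-step equations of the hitting
times, and by the maximum principle for the Laplacian it is their only solution. Summed over
ordered pairs the antisymmetric part `(D v - D u) / 2` cancels, leaving
`(|V| - 1) ∑ d = 2 (|V| - 1) W`.
-/

open Finset Matrix

namespace SimpleGraph

section Metric

variable {V : Type*} {G : SimpleGraph V}

lemma Connected.exists_adj_dist_add_one_eq (hG : G.Connected) {u v : V} (huv : u ≠ v) :
    ∃ x, G.Adj u x ∧ G.dist v x + 1 = G.dist v u := by
  obtain ⟨p, hp⟩ := hG.exists_walk_length_eq_dist u v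
  cases p with
  | nil => exact absurd rfl huv
  | @cons _ x _ h q =>
    refine ⟨x, h, le_antisymm ?_ ?_⟩
    · simpa [dist_comm, ← hp] using dist_le q
    · have := hG.dist_triangle (u := v) (v := x) (w := u)
      rwa [dist_comm (u := x), dist_eq_one_iff_adj.2 h] at this

lemma IsTree.eq_of_adj_of_dist_add_one_eq (hG : G.IsTree) {u v x y : V} (hx : G.Adj u x)
    (hy : G.Adj u y) (hxv : G.dist v x + 1 = G.dist v u) (hyv : G.dist v y + 1 = G.dist v u) :
    x = y := by
  have hpath {a : V} (h : G.Adj u a) (had : G.dist v a + 1 = G.dist v u) :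
      ∃ r : G.Walk a v, (Walk.cons h r).IsPath := by
    obtain ⟨r, hr⟩ := hG.connected.exists_walk_length_eq_dist a v
    exact ⟨r, Walk.isPath_of_length_eq_dist _ (by rw [Walk.length_cons, hr, dist_comm,
      dist_comm (u := u), had])⟩
  obtain ⟨p, hp⟩ := hpath hx hxv
  obtain ⟨q, hq⟩ := hpath hy hyv
  have := (hG.isAcyclic.subsingleton_path u v).elim ⟨_, hp⟩ ⟨_, hq⟩
  simpa using congrArg (fun r : G.Path u v => r.val.snd) this

lemma IsTree.sum_degree_eq [Fintype V] [DecidableRel G.Adj] (hG : G.IsTree) :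
    ∑ w, (G.degree w : ℝ) = 2 * (Fintype.card V - 1) := by
  rw [← hG.card_edgeFinset, Nat.cast_add, Nat.cast_one, add_sub_cancel_right]
  exact_mod_cast G.sum_degrees_eq_twice_card_edges

lemma wienerIndex_eq_zero_of_subsingleton [Fintype V] [Subsingleton V] : wienerIndex G = 0 := by
  have hdist (u v : V) : G.dist u v = 0 := by rw [Subsingleton.elim u v, dist_self]
  simp [wienerIndex, hdist]

end Metric

variable {V : Type*} [Fintype V] [DecidableEq V] {G : SimpleGraph V} [DecidableRel G.Adj]

lemma lapMatrix_mulVec_apply_eq_sum_sub (g : V → ℝ) (u : V) :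
    (G.lapMatrix ℝ *ᵥ g) u = ∑ w ∈ G.neighborFinset u, (g u - g w) := by
  rw [lapMatrix_mulVec_apply, sum_sub_distrib, sum_const, card_neighborFinset_eq_degree,
    nsmul_eq_mul]

lemma apply_eq_of_adj_of_forall_le {g : V → ℝ} {u w : V} (hg : (G.lapMatrix ℝ *ᵥ g) u = 0)
    (hmax : ∀ x, g x ≤ g u) (hadj : G.Adj u w) : g w = g u := by
  rw [lapMatrix_mulVec_apply_eq_sum_sub] at hg
  have := (sum_eq_zero_iff_of_nonneg fun x _ => sub_nonneg.2 (hmax x)).1 hg w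
    ((G.mem_neighborFinset u w).2 hadj)
  linarith

lemma Walk.apply_eq_of_forall_le {g : V → ℝ} {v : V}
    (hg : ∀ u ≠ v, (G.lapMatrix ℝ *ᵥ g) u = 0) :
    ∀ {u : V} (_ : G.Walk u v), (∀ x, g x ≤ g u) → g v = g u
  | _, .nil, _ => rfl
  | u, .cons h q, hmax => by
    by_cases huv : u = v
    · rw [huv]
    · have hw := apply_eq_of_adj_of_forall_le (hg u huv) hmax h
      rw [Walk.apply_eq_of_forall_le hg q fun x => hw ▸ hmax x, hw]

lemma Connected.le_of_lapMatrix_mulVec_eq_zero (hG : G.Connected) {g : V → ℝ} {v : V}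
    (hg : ∀ u ≠ v, (G.lapMatrix ℝ *ᵥ g) u = 0) (x : V) : g x ≤ g v := by
  obtain ⟨u, -, hu⟩ := exists_max_image univ g (univ_nonempty_iff.2 hG.nonempty)
  rw [(hG u v).some.apply_eq_of_forall_le hg fun y => hu y (mem_univ y)]
  exact hu x (mem_univ x)

lemma Connected.eq_of_lapMatrix_mulVec_eq_zero (hG : G.Connected) {g : V → ℝ} {v : V}
    (hg : ∀ u ≠ v, (G.lapMatrix ℝ *ᵥ g) u = 0) (x : V) : g x = g v := by
  have hneg : ∀ u ≠ v, (G.lapMatrix ℝ *ᵥ -g) u = 0 := fun u hu => by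
    rw [mulVec_neg, Pi.neg_apply, hg u hu, neg_zero]
  exact le_antisymm (hG.le_of_lapMatrix_mulVec_eq_zero hg x)
    (neg_le_neg_iff.1 (hG.le_of_lapMatrix_mulVec_eq_zero hneg x))

lemma isHittingTime_iff {H : V → V → ℝ} : IsHittingTime G H ↔
    (∀ v, H v v = 0) ∧
      ∀ u v, u ≠ v → (G.lapMatrix ℝ *ᵥ fun x => H x v) u = G.degree u := by
  refine and_congr_right' (forall₃_congr fun u v _ => ?_)
  rw [lapMatrix_mulVec_apply]
  constructor <;> intro h <;> linarith

lemma Connected.isHittingTime_unique (hG : G.Connected) {H H' : V → V → ℝ}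
    (hH : IsHittingTime G H) (hH' : IsHittingTime G H') : H = H' := by
  funext u v
  have hharm : ∀ w ≠ v, (G.lapMatrix ℝ *ᵥ ((fun x => H x v) - fun x => H' x v)) w = 0 :=
    fun w hw => by
      rw [mulVec_sub, Pi.sub_apply, (isHittingTime_iff.1 hH).2 w v hw,
        (isHittingTime_iff.1 hH').2 w v hw, sub_self]
  have := hG.eq_of_lapMatrix_mulVec_eq_zero hharm u
  simp only [Pi.sub_apply, hH.1 v, hH'.1 v, sub_self, sub_eq_zero] at this
  exact this

lemma IsTree.lapMatrix_mulVec_dist (hG : G.IsTree) (u v : V) :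
    (G.lapMatrix ℝ *ᵥ fun x => (G.dist v x : ℝ)) u =
      2 - G.degree u - if u = v then 2 else 0 := by
  rw [lapMatrix_mulVec_apply_eq_sum_sub]
  split_ifs with huv
  · subst huv
    have hnbr : ∀ w ∈ G.neighborFinset u, (G.dist u u : ℝ) - G.dist u w = -1 := fun w hw => by
      rw [dist_self, dist_eq_one_iff_adj.2 ((G.mem_neighborFinset u w).1 hw)]
      norm_num
    rw [sum_congr rfl hnbr, sum_const, card_neighborFinset_eq_degree, nsmul_eq_mul]
    ring
  · obtain ⟨x₀, hx₀, hd₀⟩ := hG.connected.exists_adj_dist_add_one_eq huv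
    have hnbr : ∀ w ∈ G.neighborFinset u,
        (G.dist v u : ℝ) - G.dist v w = (if w = x₀ then 2 else 0) - 1 := fun w hw => by
      rw [mem_neighborFinset] at hw
      rcases hG.dist_eq_dist_add_one_of_adj v hw with h | h
      · rw [if_pos (hG.eq_of_adj_of_dist_add_one_eq hw hx₀ h.symm hd₀), h]
        push_cast
        ring
      · have hne : w ≠ x₀ := by rintro rfl; omega
        rw [if_neg hne, h]
        push_cast
        ring
    rw [sum_congr rfl hnbr, sum_sub_distrib, sum_ite_eq',
      if_pos ((G.mem_neighborFinset u x₀).2 hx₀), sum_const, card_neighborFinset_eq_degree,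
      nsmul_eq_mul]
    ring

variable (G) in
noncomputable def degreeDistSum (x : V) : ℝ :=
  ∑ w, (G.degree w : ℝ) * G.dist w x

lemma IsTree.lapMatrix_mulVec_degreeDistSum (hG : G.IsTree) (u : V) :
    (G.lapMatrix ℝ *ᵥ G.degreeDistSum) u =
      2 * (Fintype.card V - 1) * (2 - G.degree u) - 2 * G.degree u := by
  have hsum : G.degreeDistSum = ∑ w, (G.degree w : ℝ) • fun x => (G.dist w x : ℝ) := by
    funext x
    simp [degreeDistSum]
  simp_rw [hsum, mulVec_sum, mulVec_smul, Finset.sum_apply, Pi.smul_apply, smul_eq_mul,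
    hG.lapMatrix_mulVec_dist, mul_sub, sum_sub_distrib, mul_ite, mul_zero, sum_ite_eq,
    mem_univ, if_true, ← sum_mul, hG.sum_degree_eq]
  ring

variable (G) in
noncomputable def treeHittingTime (u v : V) : ℝ :=
  (Fintype.card V - 1) * G.dist u v + (G.degreeDistSum v - G.degreeDistSum u) / 2

lemma IsTree.isHittingTime_treeHittingTime (hG : G.IsTree) :
    IsHittingTime G (treeHittingTime G) := by
  refine isHittingTime_iff.2 ⟨fun v => by simp [treeHittingTime], fun u v huv => ?_⟩
  have hsplit : (fun x => treeHittingTime G x v) =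
      ((Fintype.card V : ℝ) - 1) • (fun x => (G.dist v x : ℝ)) -
        (2⁻¹ : ℝ) • G.degreeDistSum + (G.degreeDistSum v / 2) • fun _ => 1 := by
    funext x
    simp only [treeHittingTime, Pi.add_apply, Pi.sub_apply, Pi.smul_apply, smul_eq_mul,
      dist_comm (u := x)]
    ring
  rw [hsplit, mulVec_add, mulVec_sub, mulVec_smul, mulVec_smul, mulVec_smul,
    lapMatrix_mulVec_const_eq_zero, smul_zero, add_zero]
  simp only [Pi.sub_apply, Pi.smul_apply, smul_eq_mul,
    hG.lapMatrix_mulVec_dist, hG.lapMatrix_mulVec_degreeDistSum, if_neg huv]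
  ring

lemma sum_treeHittingTime :
    ∑ u, ∑ v ∈ univ.erase u, treeHittingTime G u v =
      2 * (Fintype.card V - 1) * wienerIndex G := by
  have hdiag (u : V) :
      ∑ v ∈ univ.erase u, treeHittingTime G u v = ∑ v, treeHittingTime G u v :=
    sum_erase _ (by simp [treeHittingTime])
  have hanti : ∑ u : V, ∑ v : V, (G.degreeDistSum v - G.degreeDistSum u) = 0 := by
    simp only [sum_sub_distrib]
    rw [sum_comm]
    exact sub_self _
  rw [sum_congr rfl fun u _ => hdiag u]
  simp only [treeHittingTime, sum_add_distrib, ← mul_sum, ← sum_div, hanti, wienerIndex]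
  ring

end SimpleGraph

/-- For a finite tree `T`, `2 W_T = |V_T| · F̄_T`, where `F̄_T` is the mean
first-passage time; equivalently, the sum of first-passage times over all ordered
pairs of distinct vertices equals `2(|V_T| − 1) W_T`. -/
theorem wiener_eq_mfpt_tree {V : Type*} [Fintype V] [DecidableEq V]
    (G : SimpleGraph V) [DecidableRel G.Adj] (hG : G.IsTree)
    (H : V → V → ℝ) (hH : IsHittingTime G H) :
    2 * wienerIndex G
        = (Fintype.card V : ℝ) *
          ((∑ u : V, ∑ v ∈ Finset.univ.erase u, H u v) /
            ((Fintype.card V : ℝ) * ((Fintype.card V : ℝ) - 1))) ∧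
    (∑ u : V, ∑ v ∈ Finset.univ.erase u, H u v)
        = 2 * ((Fintype.card V : ℝ) - 1) * wienerIndex G := by
  have hsum : ∑ u : V, ∑ v ∈ Finset.univ.erase u, H u v
      = 2 * ((Fintype.card V : ℝ) - 1) * wienerIndex G := by
    rw [hG.connected.isHittingTime_unique hH hG.isHittingTime_treeHittingTime,
      SimpleGraph.sum_treeHittingTime]
  refine ⟨?_, hsum⟩
  rw [hsum]
  rcases subsingleton_or_nontrivial V with hV | hV
  · simp [SimpleGraph.wienerIndex_eq_zero_of_subsingleton]
  · have hcard : (1 : ℝ) < Fintype.card V := by exact_mod_cast Fintype.one_lt_card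
    have hcard' : (Fintype.card V : ℝ) - 1 ≠ 0 := sub_ne_zero.2 hcard.ne'
    field_simp
end

section
/- Let Y_I(t) be the deterministic uniform growth tree defined by: Y_I(0) is a single edge (two vertices joined by an edge), and for t ≥ 1, Y_I(t) is obtained from Y_I(t−1) by attaching μ new pendant (leaf) vertices to every vertex, where μ ≥ 1 is a fixed integer. Then for every t ≥ 0 the mean first-passage time of the simple random walk on Y_I(t) is F̄(Y_I(t)) = (4μt + μ − 1)(1 + μ)^{t−1} + 2/(1 + μ). -/
set_option autoImplicit false

open Finset

/-- The two endpoints of an unordered pair, as a `Finset`. -/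
def sym2Finset (e : Sym2 ℕ) : Finset ℕ :=
  Sym2.lift ⟨fun a b => {a, b}, fun a b => by ext x; simp [or_comm]⟩ e

/-- The vertex set of the graph on `ℕ` whose edge set is the finite set `E`. -/
def verts (E : Finset (Sym2 ℕ)) : Finset ℕ := E.biUnion sym2Finset

/-- A base label strictly larger than every vertex label used in `E`. -/
def freshE (E : Finset (Sym2 ℕ)) : ℕ := (verts E).sup id + 1

/-- Degree of the vertex `v` in the graph with edge set `E`. -/
def degE (E : Finset (Sym2 ℕ)) (v : ℕ) : ℕ :=
  ((verts E).filter (fun w => s(v, w) ∈ E)).card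

/-- `H` is the matrix of first-passage times (expected hitting times) of the simple
random walk on the graph with edge set `E`:  `H u v` is the expected number of steps
for the walk started at `u` to first reach `v`.  It is characterized by `H v v = 0`
together with the one-step (harmonic) equations on the vertex set. -/
def IsHT (E : Finset (Sym2 ℕ)) (H : ℕ → ℕ → ℝ) : Prop :=
  (∀ v ∈ verts E, H v v = 0) ∧
  ∀ u ∈ verts E, ∀ v ∈ verts E, u ≠ v →
    (degE E u : ℝ) * H u v
      = (degE E u : ℝ) + ∑ w ∈ verts E, if s(u, w) ∈ E then H w v else 0

/-- One step of deterministic uniform growth: attach `μ` new pendant (leaf) vertices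
to every vertex, with fresh labels. -/
def stepYI (μ : ℕ) (E : Finset (Sym2 ℕ)) : Finset (Sym2 ℕ) :=
  E ∪ ((verts E) ×ˢ Finset.range μ).image
      (fun vk => s(vk.1, freshE E + Nat.pair vk.1 vk.2))

/-- The deterministic uniform growth tree `Y_I(t)`: `Y_I(0)` is a single edge, and
`Y_I(t)` arises from `Y_I(t-1)` by attaching `μ` new leaves to every vertex. -/
def YI (μ t : ℕ) : Finset (Sym2 ℕ) := (stepYI μ)^[t] {s(0, 1)}


/-!
Hitting times on a connected graph are determined by their one-step equations (the difference
of two solutions has zero Dirichlet energy), so it suffices to exhibit one solution. When `μ`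
leaves are attached to every vertex of a tree with `m` edges, hitting times between old vertices
become `(1 + μ) H + μ d`, with `d` the tree distance; a new leaf is left in one step, and it is
entered from its parent in `2 m' - 1` expected steps, `m'` the new number of edges (Kac's
formula). On a tree the commute-time identity `H u v + H v u = m (d u v + d v u)` turns the sum
of all hitting times into `m` times the sum of all distances, which grows by
`W' = (1 + μ)² W + 2 μ n ((1 + μ) n - 1)` and has a closed form.
-/

variable {E : Finset (Sym2 ℕ)}

lemma mem_sym2Finset {x a b : ℕ} : x ∈ sym2Finset s(a, b) ↔ x = a ∨ x = b := by
  simp [sym2Finset]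

lemma mem_verts_of_mem_left {a b : ℕ} (h : s(a, b) ∈ E) : a ∈ verts E :=
  mem_biUnion.2 ⟨_, h, mem_sym2Finset.2 (Or.inl rfl)⟩

lemma mem_verts_of_mem_right {a b : ℕ} (h : s(a, b) ∈ E) : b ∈ verts E :=
  mem_biUnion.2 ⟨_, h, mem_sym2Finset.2 (Or.inr rfl)⟩

def nbrs (E : Finset (Sym2 ℕ)) (u : ℕ) : Finset ℕ := (verts E).filter fun w => s(u, w) ∈ E

lemma mem_nbrs {u w : ℕ} : w ∈ nbrs E u ↔ s(u, w) ∈ E := by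
  simpa [nbrs] using mem_verts_of_mem_right

lemma degE_eq_card_nbrs (u : ℕ) : degE E u = (nbrs E u).card := rfl

lemma sum_nbrs_one (u : ℕ) : ∑ _w ∈ nbrs E u, (1 : ℝ) = degE E u := by
  simp [degE_eq_card_nbrs]

lemma isHT_iff_sum_nbrs {H : ℕ → ℕ → ℝ} :
    IsHT E H ↔ (∀ v ∈ verts E, H v v = 0) ∧ ∀ u ∈ verts E, ∀ v ∈ verts E, u ≠ v →
      ∑ w ∈ nbrs E u, H w v = degE E u * (H u v - 1) := by
  simp only [IsHT, nbrs, sum_filter]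
  refine and_congr_right fun _ => forall₂_congr fun u _ => forall₂_congr fun v _ =>
    imp_congr_right fun _ => ⟨fun h => by linarith, fun h => by linarith⟩

lemma sum_sum_nbrs_comm (g : ℕ → ℕ → ℝ) :
    ∑ x ∈ verts E, ∑ w ∈ nbrs E x, g x w = ∑ x ∈ verts E, ∑ w ∈ nbrs E x, g w x := by
  simp only [nbrs, sum_filter]
  rw [sum_comm]
  simp only [Sym2.eq_swap]

lemma sum_sum_nbrs_sq_sub (D : ℕ → ℝ) :
    ∑ x ∈ verts E, ∑ w ∈ nbrs E x, (D x - D w) ^ 2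
      = 2 * ∑ x ∈ verts E, D x * (degE E x * D x - ∑ w ∈ nbrs E x, D w) := by
  have hsymm := sum_sum_nbrs_comm (E := E) fun _ w => D w ^ 2
  have hexp : ∀ x, ∑ w ∈ nbrs E x, (D x - D w) ^ 2
      = ∑ w ∈ nbrs E x, D w ^ 2 + (degE E x * D x ^ 2 - 2 * (D x * ∑ w ∈ nbrs E x, D w)) := by
    intro x
    simp only [sub_sq, sum_add_distrib, sum_sub_distrib, ← mul_sum, sum_const, nsmul_eq_mul,
      degE_eq_card_nbrs]
    ring
  rw [sum_congr rfl fun x _ => hexp x, sum_add_distrib, hsymm, mul_sum, ← sum_add_distrib]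
  refine sum_congr rfl fun x _ => ?_
  rw [sum_const, nsmul_eq_mul, ← degE_eq_card_nbrs]
  ring

def EdgeConnected (E : Finset (Sym2 ℕ)) : Prop :=
  ∀ f : ℕ → ℝ, (∀ u w, s(u, w) ∈ E → f u = f w) → ∀ x ∈ verts E, ∀ y ∈ verts E, f x = f y

lemma eq_of_adj_of_energy_eq_zero {D : ℕ → ℝ}
    (h : ∑ x ∈ verts E, ∑ w ∈ nbrs E x, (D x - D w) ^ 2 = 0) {u w : ℕ} (huw : s(u, w) ∈ E) :
    D u = D w := by
  have hu := mem_verts_of_mem_left huw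
  have hx := (sum_eq_zero_iff_of_nonneg fun x _ => sum_nonneg fun w _ => sq_nonneg (D x - D w)).1
    h u hu
  have := (sum_eq_zero_iff_of_nonneg fun w _ => sq_nonneg (D u - D w)).1 hx w (mem_nbrs.2 huw)
  linarith [pow_eq_zero_iff (n := 2) two_ne_zero |>.1 this]

theorem IsHT.unique {H₁ H₂ : ℕ → ℕ → ℝ} (hE : EdgeConnected E) (h₁ : IsHT E H₁)
    (h₂ : IsHT E H₂) {u v : ℕ} (hu : u ∈ verts E) (hv : v ∈ verts E) : H₁ u v = H₂ u v := by
  rw [isHT_iff_sum_nbrs] at h₁ h₂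
  set D : ℕ → ℝ := fun x => H₁ x v - H₂ x v
  have hDv : D v = 0 := by simp [D, h₁.1 v hv, h₂.1 v hv]
  have harmonic : ∀ x ∈ verts E, D x * (degE E x * D x - ∑ w ∈ nbrs E x, D w) = 0 := by
    intro x hx
    by_cases hxv : x = v
    · rw [hxv, hDv, zero_mul]
    · simp only [D, sum_sub_distrib, h₁.2 x hx v hv hxv, h₂.2 x hx v hv hxv]
      ring
  have hconst := hE D fun a b hab => eq_of_adj_of_energy_eq_zero
    (by rw [sum_sum_nbrs_sq_sub, sum_eq_zero harmonic, mul_zero]) hab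
  linarith [hconst u hu v hv]

section Growth

variable {μ : ℕ}

def leaf (E : Finset (Sym2 ℕ)) (v k : ℕ) : ℕ := freshE E + Nat.pair v k

def parent (E : Finset (Sym2 ℕ)) (x : ℕ) : ℕ :=
  if x ∈ verts E then x else (Nat.unpair (x - freshE E)).1

lemma leaf_not_mem_verts {v k : ℕ} : leaf E v k ∉ verts E := fun h => by
  have : leaf E v k ≤ (verts E).sup id := le_sup (f := id) h
  simp only [leaf, freshE] at this
  omega

lemma leaf_ne_of_mem {x v k : ℕ} (hx : x ∈ verts E) : leaf E v k ≠ x :=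
  fun h => leaf_not_mem_verts (h ▸ hx)

lemma leaf_inj {v k v' k' : ℕ} : leaf E v k = leaf E v' k' ↔ v = v' ∧ k = k' := by
  rw [leaf, leaf, add_right_inj, Nat.pair_eq_pair]

lemma parent_of_mem {x : ℕ} (hx : x ∈ verts E) : parent E x = x := if_pos hx

lemma parent_leaf {v k : ℕ} : parent E (leaf E v k) = v := by
  rw [parent, if_neg leaf_not_mem_verts, leaf, Nat.add_sub_cancel_left, Nat.unpair_pair]

lemma mem_stepYI {e : Sym2 ℕ} :
    e ∈ stepYI μ E ↔ e ∈ E ∨ ∃ v ∈ verts E, ∃ k < μ, e = s(v, leaf E v k) := by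
  simp only [stepYI, mem_union, mem_image, mem_product, mem_range, Prod.exists, leaf]
  aesop

lemma verts_stepYI :
    verts (stepYI μ E) = verts E ∪ (verts E ×ˢ range μ).image fun p => leaf E p.1 p.2 := by
  ext x
  simp only [verts, mem_biUnion, mem_union, mem_image, mem_product, mem_range, Prod.exists,
    mem_stepYI]
  constructor
  · rintro ⟨e, he | ⟨v, hv, k, hk, rfl⟩, hx⟩
    · exact Or.inl ⟨e, he, hx⟩
    · rcases mem_sym2Finset.1 hx with rfl | rfl
      · exact Or.inl hv
      · exact Or.inr ⟨v, k, ⟨hv, hk⟩, rfl⟩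
  · rintro (⟨e, he, hx⟩ | ⟨v, k, ⟨hv, hk⟩, rfl⟩)
    · exact ⟨e, Or.inl he, hx⟩
    · exact ⟨_, Or.inr ⟨v, hv, k, hk, rfl⟩, mem_sym2Finset.2 (Or.inr rfl)⟩

lemma mem_verts_stepYI {x : ℕ} :
    x ∈ verts (stepYI μ E) ↔ x ∈ verts E ∨ ∃ v ∈ verts E, ∃ k < μ, x = leaf E v k := by
  simp only [verts_stepYI, mem_union, mem_image, mem_product, mem_range, Prod.exists]
  aesop

lemma disjoint_verts_leaves :
    Disjoint (verts E) ((verts E ×ˢ range μ).image fun p => leaf E p.1 p.2) :=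
  disjoint_right.2 fun _ hx => by
    obtain ⟨_, _, rfl⟩ := mem_image.1 hx
    exact leaf_not_mem_verts

lemma injOn_leaf :
    Set.InjOn (fun p : ℕ × ℕ => leaf E p.1 p.2) (↑(verts E ×ˢ range μ) : Set (ℕ × ℕ)) :=
  fun _ _ _ _ h => Prod.ext_iff.2 (leaf_inj.1 h)

lemma sum_verts_stepYI (g : ℕ → ℝ) :
    ∑ x ∈ verts (stepYI μ E), g x
      = ∑ x ∈ verts E, g x + ∑ v ∈ verts E, ∑ k ∈ range μ, g (leaf E v k) := by
  rw [verts_stepYI, sum_union disjoint_verts_leaves, sum_image injOn_leaf, sum_product]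

lemma card_verts_stepYI : (verts (stepYI μ E)).card = (1 + μ) * (verts E).card := by
  rw [verts_stepYI, card_union_of_disjoint disjoint_verts_leaves, card_image_of_injOn injOn_leaf,
    card_product, card_range]
  ring

lemma card_stepYI : (stepYI μ E).card = E.card + μ * (verts E).card := by
  have hinj : Set.InjOn (fun p : ℕ × ℕ => s(p.1, leaf E p.1 p.2))
      (↑(verts E ×ˢ range μ) : Set (ℕ × ℕ)) := by
    rintro ⟨a, k⟩ hak ⟨b, j⟩ - h
    have ha : a ∈ verts E := (mem_product.1 hak).1
    rcases Sym2.eq_iff.1 h with ⟨rfl, h⟩ | ⟨h, -⟩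
    · exact Prod.ext rfl (leaf_inj.1 h).2
    · exact absurd h (leaf_ne_of_mem ha).symm
  have hdisj : Disjoint E ((verts E ×ˢ range μ).image fun p => s(p.1, leaf E p.1 p.2)) :=
    disjoint_right.2 fun _ he h => by
      obtain ⟨_, _, rfl⟩ := mem_image.1 he
      exact leaf_not_mem_verts (mem_verts_of_mem_right h)
  change (E ∪ (verts E ×ˢ range μ).image fun p => s(p.1, leaf E p.1 p.2)).card = _
  rw [card_union_of_disjoint hdisj, card_image_of_injOn hinj, card_product, card_range,
    mul_comm]

lemma adj_stepYI_of_mem {u w : ℕ} (hu : u ∈ verts E) :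
    s(u, w) ∈ stepYI μ E ↔ s(u, w) ∈ E ∨ ∃ k < μ, w = leaf E u k := by
  rw [mem_stepYI]
  refine or_congr_right ⟨?_, fun ⟨k, hk, hw⟩ => ⟨u, hu, k, hk, hw ▸ rfl⟩⟩
  rintro ⟨v, -, k, hk, h⟩
  rcases Sym2.eq_iff.1 h with ⟨rfl, rfl⟩ | ⟨rfl, -⟩
  · exact ⟨k, hk, rfl⟩
  · exact absurd hu leaf_not_mem_verts

lemma adj_stepYI_leaf {u k w : ℕ} (hu : u ∈ verts E) (hk : k < μ) :
    s(leaf E u k, w) ∈ stepYI μ E ↔ w = u := by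
  rw [mem_stepYI]
  constructor
  · rintro (h | ⟨v, hv, j, -, h⟩)
    · exact absurd (mem_verts_of_mem_left h) leaf_not_mem_verts
    · rcases Sym2.eq_iff.1 h with ⟨h, -⟩ | ⟨h, rfl⟩
      · exact absurd (h ▸ hv) leaf_not_mem_verts
      · exact ((leaf_inj.1 h).1).symm
  · rintro rfl
    exact Or.inr ⟨_, hu, k, hk, Sym2.eq_swap⟩

lemma nbrs_stepYI_of_mem {u : ℕ} (hu : u ∈ verts E) :
    nbrs (stepYI μ E) u = nbrs E u ∪ (range μ).image (leaf E u) := by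
  ext w
  simp only [mem_nbrs, mem_union, mem_image, mem_range, adj_stepYI_of_mem hu, eq_comm (a := w)]

lemma nbrs_stepYI_leaf {u k : ℕ} (hu : u ∈ verts E) (hk : k < μ) :
    nbrs (stepYI μ E) (leaf E u k) = {u} := by
  ext w
  rw [mem_nbrs, adj_stepYI_leaf hu hk, mem_singleton]

lemma sum_nbrs_stepYI_of_mem {u : ℕ} (hu : u ∈ verts E) (g : ℕ → ℝ) :
    ∑ w ∈ nbrs (stepYI μ E) u, g w = ∑ w ∈ nbrs E u, g w + ∑ k ∈ range μ, g (leaf E u k) := by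
  rw [nbrs_stepYI_of_mem hu, sum_union, sum_image fun _ _ _ _ h => (leaf_inj.1 h).2]
  exact disjoint_right.2 fun _ hw h => by
    obtain ⟨_, _, rfl⟩ := mem_image.1 hw
    exact leaf_not_mem_verts (mem_verts_of_mem_right (mem_nbrs.1 h))

lemma degE_stepYI_of_mem {u : ℕ} (hu : u ∈ verts E) :
    (degE (stepYI μ E) u : ℝ) = degE E u + μ := by
  rw [← sum_nbrs_one, sum_nbrs_stepYI_of_mem hu, sum_nbrs_one]
  simp

lemma degE_stepYI_leaf {u k : ℕ} (hu : u ∈ verts E) (hk : k < μ) :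
    degE (stepYI μ E) (leaf E u k) = 1 := by
  rw [degE_eq_card_nbrs, nbrs_stepYI_leaf hu hk, card_singleton]

lemma parent_mem_verts {x : ℕ} (hx : x ∈ verts (stepYI μ E)) : parent E x ∈ verts E := by
  rcases mem_verts_stepYI.1 hx with hx | ⟨v, hv, k, -, rfl⟩
  · rwa [parent_of_mem hx]
  · rwa [parent_leaf]

lemma edgeConnected_stepYI (hE : EdgeConnected E) : EdgeConnected (stepYI μ E) := by
  intro f hf
  have hparent : ∀ x ∈ verts (stepYI μ E), f x = f (parent E x) := by
    intro x hx
    rcases mem_verts_stepYI.1 hx with hx | ⟨v, hv, k, hk, rfl⟩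
    · rw [parent_of_mem hx]
    · rw [parent_leaf]
      exact hf _ _ ((adj_stepYI_leaf hv hk).2 rfl)
  intro x hx y hy
  rw [hparent x hx, hparent y hy]
  exact hE f (fun u w h => hf u w (mem_union_left _ h)) _ (parent_mem_verts hx) _
    (parent_mem_verts hy)

end Growth

section Extension

variable {μ : ℕ} {f : ℕ → ℕ → ℝ} {a b : ℝ}

def extendStep (E : Finset (Sym2 ℕ)) (f : ℕ → ℕ → ℝ) (a b : ℝ) (x y : ℕ) : ℝ :=
  if x = y then 0
  else f (parent E x) (parent E y) + (if x ∈ verts E then 0 else a)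
    + (if y ∈ verts E then 0 else b)

lemma extendStep_of_mem (hf : ∀ v ∈ verts E, f v v = 0) {x y : ℕ} (hx : x ∈ verts E)
    (hy : y ∈ verts E) :
    extendStep E f a b x y = f x y := by
  by_cases hxy : x = y
  · rw [extendStep, if_pos hxy, hxy, hf y hy]
  · rw [extendStep, if_neg hxy, parent_of_mem hx, parent_of_mem hy, if_pos hx, if_pos hy]
    ring

lemma extendStep_leaf_left (hf : ∀ v ∈ verts E, f v v = 0) {u k y : ℕ} (hu : u ∈ verts E)
    (hy : y ≠ leaf E u k) :
    extendStep E f a b (leaf E u k) y = extendStep E f a b u y + a := by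
  rw [extendStep, if_neg hy.symm, parent_leaf, if_neg leaf_not_mem_verts]
  by_cases huy : u = y
  · subst huy
    rw [extendStep, if_pos rfl, parent_of_mem hu, if_pos hu, hf u hu]
    ring
  · rw [extendStep, if_neg huy, parent_of_mem hu, if_pos hu]
    ring

lemma extendStep_leaf_right (hf : ∀ v ∈ verts E, f v v = 0) {v j x : ℕ} (hv : v ∈ verts E)
    (hx : x ≠ leaf E v j) :
    extendStep E f a b x (leaf E v j) = extendStep E f a b x v + b := by
  rw [extendStep, if_neg hx, parent_leaf, if_neg leaf_not_mem_verts]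
  by_cases hxv : x = v
  · subst hxv
    rw [extendStep, if_pos rfl, parent_of_mem hv, if_pos hv, hf x hv]
    ring
  · rw [extendStep, if_neg hxv, parent_of_mem hv, if_pos hv]
    ring

lemma sum_range_extendStep_leaf_leaf (hf : ∀ v ∈ verts E, f v v = 0) {u j : ℕ}
    (hu : u ∈ verts E) (hj : j < μ) :
    ∑ k ∈ range μ, extendStep E f a b (leaf E u k) (leaf E u j) = (μ - 1) * (a + b) := by
  have hterm : ∀ k, extendStep E f a b (leaf E u k) (leaf E u j)
      = (a + b) - if k = j then a + b else 0 := by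
    intro k
    by_cases hkj : k = j
    · rw [hkj, extendStep, if_pos rfl, if_pos rfl, sub_self]
    · rw [extendStep_leaf_left hf hu fun h => hkj (leaf_inj.1 h).2.symm,
        extendStep_leaf_right hf hu (leaf_ne_of_mem hu).symm, extendStep, if_pos rfl, if_neg hkj]
      ring
  simp only [hterm, sum_sub_distrib, sum_ite_eq', mem_range, if_pos hj, sum_const, card_range,
    nsmul_eq_mul]
  ring

lemma extendStep_add_swap {x y : ℕ} (hxy : x ≠ y) :
    extendStep E f a b x y + extendStep E f a b y x
      = f (parent E x) (parent E y) + f (parent E y) (parent E x)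
        + (a + b) * ((if x ∈ verts E then 0 else 1) + (if y ∈ verts E then 0 else 1)) := by
  rw [extendStep, extendStep, if_neg hxy, if_neg (Ne.symm hxy)]
  split_ifs <;> ring

lemma sum_verts_stepYI_parent (g : ℕ → ℝ) :
    ∑ x ∈ verts (stepYI μ E), g (parent E x) = (1 + μ) * ∑ v ∈ verts E, g v := by
  rw [sum_verts_stepYI, add_mul, one_mul, mul_sum]
  simp [parent_leaf, sum_congr rfl fun x (hx : x ∈ verts E) => congrArg g (parent_of_mem hx)]

lemma sum_verts_stepYI_ite_mem (c : ℝ) :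
    ∑ x ∈ verts (stepYI μ E), (if x ∈ verts E then 0 else c) = μ * (verts E).card * c := by
  rw [sum_verts_stepYI]
  simp [leaf_not_mem_verts, sum_ite_of_true, mul_assoc, mul_comm]

lemma sum_sum_extendStep (hf : ∀ v ∈ verts E, f v v = 0) :
    ∑ x ∈ verts (stepYI μ E), ∑ y ∈ verts (stepYI μ E), extendStep E f a b x y
      = (1 + μ) ^ 2 * ∑ u ∈ verts E, ∑ v ∈ verts E, f u v
        + μ * (verts E).card * (a + b) * ((1 + μ) * (verts E).card - 1) := by
  have hpoint : ∀ x ∈ verts (stepYI μ E), ∀ y, extendStep E f a b x y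
      = f (parent E x) (parent E y) + (if x ∈ verts E then 0 else a)
        + (if y ∈ verts E then 0 else b)
        - if x = y then (if x ∈ verts E then 0 else a + b) else 0 := by
    intro x hx y
    by_cases hxy : x = y
    · subst hxy
      rw [extendStep, if_pos rfl, if_pos rfl, hf _ (parent_mem_verts hx)]
      split_ifs <;> ring
    · rw [extendStep, if_neg hxy, if_neg hxy, sub_zero]
  have hff : ∑ x ∈ verts (stepYI μ E), ∑ y ∈ verts (stepYI μ E), f (parent E x) (parent E y)
      = (1 + μ) ^ 2 * ∑ u ∈ verts E, ∑ v ∈ verts E, f u v := by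
    rw [sum_congr rfl fun x _ => sum_verts_stepYI_parent (f (parent E x)), ← mul_sum,
      sum_verts_stepYI_parent fun u => ∑ v ∈ verts E, f u v]
    ring
  rw [sum_congr rfl fun x hx => sum_congr rfl fun y _ => hpoint x hx y]
  simp only [sum_sub_distrib, sum_add_distrib, sum_ite_eq, hff, sum_ite_of_true fun _ h => h,
    sum_const, nsmul_eq_mul, ← mul_sum, sum_verts_stepYI_ite_mem, card_verts_stepYI]
  push_cast
  ring

/-- Hitting times (`α = 1`, `β = 0`) and distances (`α = -1`, `β = 2`) on a tree both satisfy
`∑_{w ~ u} f w v = deg u * (f u v - α) - β` for `u ≠ v`. -/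
lemma sum_nbrs_extendStep (α : ℝ) (hf : ∀ v ∈ verts E, f v v = 0)
    (hoff : ∀ u ∈ verts E, ∀ v ∈ verts E, u ≠ v →
      ∑ w ∈ nbrs E u, f w v = degE E u * (f u v - α) - (μ * (a + α) + a - α))
    (hdiag : ∀ v ∈ verts E,
      ∑ w ∈ nbrs E v, f w v = a + b - (μ * (a + α) + a - α) - α * degE E v)
    {u v : ℕ} (hu : u ∈ verts (stepYI μ E)) (hv : v ∈ verts (stepYI μ E)) (huv : u ≠ v) :
    ∑ w ∈ nbrs (stepYI μ E) u, extendStep E f a b w v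
      = degE (stepYI μ E) u * (extendStep E f a b u v - α) - (a - α) := by
  rcases mem_verts_stepYI.1 hu with hu | ⟨p, hp, k, hk, rfl⟩
  · rw [sum_nbrs_stepYI_of_mem hu, degE_stepYI_of_mem hu]
    rcases mem_verts_stepYI.1 hv with hv | ⟨q, hq, j, hj, rfl⟩
    · rw [sum_congr rfl fun w hw =>
          extendStep_of_mem hf (mem_verts_of_mem_right (mem_nbrs.1 hw)) hv,
        sum_congr rfl fun k _ => extendStep_leaf_left hf hu (leaf_ne_of_mem hv).symm,
        hoff u hu v hv huv, extendStep_of_mem hf hu hv]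
      simp only [sum_const, card_range, nsmul_eq_mul]
      ring
    · have hold : ∀ w ∈ verts E, extendStep E f a b w (leaf E q j) = f w q + b := fun w hw => by
        rw [extendStep_leaf_right hf hq (leaf_ne_of_mem hw).symm, extendStep_of_mem hf hw hq]
      rw [sum_congr rfl fun w hw => hold w (mem_verts_of_mem_right (mem_nbrs.1 hw)),
        sum_add_distrib, sum_const, nsmul_eq_mul, ← degE_eq_card_nbrs, hold u hu]
      by_cases huq : u = q
      · subst huq
        rw [sum_range_extendStep_leaf_leaf hf hu hj, hdiag u hu, hf u hu]
        ring
      · rw [sum_congr rfl fun k _ => extendStep_leaf_left hf hu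
            fun h => huq (leaf_inj.1 h).1.symm, hold u hu, hoff u hu q hq huq]
        simp only [sum_const, card_range, nsmul_eq_mul]
        ring
  · rw [nbrs_stepYI_leaf hp hk, sum_singleton, degE_stepYI_leaf hp hk,
      extendStep_leaf_left hf hp (Ne.symm huv)]
    push_cast
    ring

end Extension

/-- `H` is the hitting-time matrix of the tree `E` and `d` satisfies the equations of its distance
matrix; the last two fields are Kac's return-time formula and the commute-time identity. -/
structure IsTreeHitting (E : Finset (Sym2 ℕ)) (H d : ℕ → ℕ → ℝ) : Prop where
  isHT : IsHT E H
  connected : EdgeConnected E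
  card_verts : (verts E).card = E.card + 1
  dist_self : ∀ v ∈ verts E, d v v = 0
  dist_of_adj : ∀ u w, s(u, w) ∈ E → d u w = 1
  sum_nbrs_dist : ∀ u ∈ verts E, ∀ v ∈ verts E, u ≠ v →
    ∑ w ∈ nbrs E u, d w v = degE E u * (d u v + 1) - 2
  sum_nbrs_hit_self : ∀ v ∈ verts E, ∑ w ∈ nbrs E v, H w v = 2 * E.card - degE E v
  hit_add_swap : ∀ u ∈ verts E, ∀ v ∈ verts E, H u v + H v u = E.card * (d u v + d v u)

def stepDist (E : Finset (Sym2 ℕ)) (d : ℕ → ℕ → ℝ) : ℕ → ℕ → ℝ := extendStep E d 1 1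

def oldStepHit (μ : ℕ) (H d : ℕ → ℕ → ℝ) (u v : ℕ) : ℝ := (1 + μ) * H u v + μ * d u v

def stepHit (μ : ℕ) (E : Finset (Sym2 ℕ)) (H d : ℕ → ℕ → ℝ) : ℕ → ℕ → ℝ :=
  extendStep E (oldStepHit μ H d) 1 (2 * (stepYI μ E).card - 1)

namespace IsTreeHitting

variable {E : Finset (Sym2 ℕ)} {H d : ℕ → ℕ → ℝ} {μ : ℕ}

lemma hit_self (h : IsTreeHitting E H d) {v : ℕ} (hv : v ∈ verts E) : H v v = 0 :=
  h.isHT.1 v hv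

lemma sum_nbrs_hit (h : IsTreeHitting E H d) {u v : ℕ} (hu : u ∈ verts E) (hv : v ∈ verts E)
    (huv : u ≠ v) : ∑ w ∈ nbrs E u, H w v = degE E u * (H u v - 1) :=
  (isHT_iff_sum_nbrs.1 h.isHT).2 u hu v hv huv

lemma sum_nbrs_dist_self (h : IsTreeHitting E H d) {v : ℕ} :
    ∑ w ∈ nbrs E v, d w v = degE E v := by
  rw [← sum_nbrs_one]
  exact sum_congr rfl fun w hw => h.dist_of_adj w v (Sym2.eq_swap ▸ mem_nbrs.1 hw)

lemma card_stepYI_eq (h : IsTreeHitting E H d) :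
    ((stepYI μ E).card : ℝ) = (1 + μ) * E.card + μ := by
  rw [card_stepYI, h.card_verts]
  push_cast
  ring

lemma oldStepHit_self (h : IsTreeHitting E H d) {v : ℕ} (hv : v ∈ verts E) :
    oldStepHit μ H d v v = 0 := by
  rw [oldStepHit, h.hit_self hv, h.dist_self v hv]
  ring

lemma sum_nbrs_oldStepHit (h : IsTreeHitting E H d) {u v : ℕ} (hu : u ∈ verts E)
    (hv : v ∈ verts E) (huv : u ≠ v) :
    ∑ w ∈ nbrs E u, oldStepHit μ H d w v
      = degE E u * (oldStepHit μ H d u v - 1) - (μ * (1 + 1) + 1 - 1) := by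
  simp only [oldStepHit, sum_add_distrib, ← mul_sum, h.sum_nbrs_hit hu hv huv,
    h.sum_nbrs_dist u hu v hv huv]
  ring

lemma sum_nbrs_oldStepHit_self (h : IsTreeHitting E H d) {v : ℕ} (hv : v ∈ verts E) :
    ∑ w ∈ nbrs E v, oldStepHit μ H d w v
      = 1 + (2 * (stepYI μ E).card - 1) - (μ * (1 + 1) + 1 - 1) - 1 * degE E v := by
  simp only [oldStepHit, sum_add_distrib, ← mul_sum, h.sum_nbrs_hit_self v hv,
    h.sum_nbrs_dist_self, h.card_stepYI_eq]
  ring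

lemma isHT_step (h : IsTreeHitting E H d) : IsHT (stepYI μ E) (stepHit μ E H d) := by
  refine isHT_iff_sum_nbrs.2 ⟨fun v _ => if_pos rfl, fun u hu v hv huv => ?_⟩
  rw [stepHit, sum_nbrs_extendStep 1 (fun _ => h.oldStepHit_self)
    (fun _ hu _ hv => h.sum_nbrs_oldStepHit hu hv) (fun _ => h.sum_nbrs_oldStepHit_self) hu hv huv]
  ring

lemma sum_nbrs_hit_self_step (h : IsTreeHitting E H d) {v : ℕ} (hv : v ∈ verts (stepYI μ E)) :
    ∑ w ∈ nbrs (stepYI μ E) v, stepHit μ E H d w v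
      = 2 * (stepYI μ E).card - degE (stepYI μ E) v := by
  have hF : ∀ v ∈ verts E, oldStepHit μ H d v v = 0 := fun _ => h.oldStepHit_self
  rcases mem_verts_stepYI.1 hv with hv | ⟨q, hq, j, hj, rfl⟩
  · rw [stepHit, sum_nbrs_stepYI_of_mem hv, degE_stepYI_of_mem hv,
      sum_congr rfl fun w hw => extendStep_of_mem hF (mem_verts_of_mem_right (mem_nbrs.1 hw)) hv,
      sum_congr rfl fun k _ => extendStep_leaf_left hF hv (leaf_ne_of_mem hv).symm,
      extendStep_of_mem hF hv hv, hF v hv, h.sum_nbrs_oldStepHit_self hv]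
    simp only [sum_const, card_range, nsmul_eq_mul]
    ring
  · rw [nbrs_stepYI_leaf hq hj, sum_singleton, degE_stepYI_leaf hq hj, stepHit,
      extendStep_leaf_right hF hq (leaf_ne_of_mem hq).symm, extendStep_of_mem hF hq hq, hF q hq]
    push_cast
    ring

lemma hit_add_swap_step (h : IsTreeHitting E H d) {x y : ℕ} (hx : x ∈ verts (stepYI μ E))
    (hy : y ∈ verts (stepYI μ E)) :
    stepHit μ E H d x y + stepHit μ E H d y x
      = (stepYI μ E).card * (stepDist E d x y + stepDist E d y x) := by
  by_cases hxy : x = y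
  · rw [hxy, stepHit, stepDist, extendStep, if_pos rfl, extendStep, if_pos rfl]
    ring
  · rw [stepHit, stepDist, extendStep_add_swap hxy, extendStep_add_swap hxy, h.card_stepYI_eq]
    simp only [oldStepHit]
    linear_combination (1 + μ) * h.hit_add_swap _ (parent_mem_verts hx) _ (parent_mem_verts hy)

lemma dist_of_adj_step (h : IsTreeHitting E H d) {u w : ℕ} (huw : s(u, w) ∈ stepYI μ E) :
    stepDist E d u w = 1 := by
  rcases mem_stepYI.1 huw with huw | ⟨v, hv, k, -, he⟩
  · rw [stepDist, extendStep_of_mem h.dist_self (mem_verts_of_mem_left huw)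
      (mem_verts_of_mem_right huw), h.dist_of_adj u w huw]
  · rcases Sym2.eq_iff.1 he with ⟨rfl, rfl⟩ | ⟨rfl, rfl⟩
    · rw [stepDist, extendStep_leaf_right h.dist_self hv (leaf_ne_of_mem hv).symm,
        extendStep_of_mem h.dist_self hv hv, h.dist_self _ hv, zero_add]
    · rw [stepDist, extendStep_leaf_left h.dist_self hv (leaf_ne_of_mem hv).symm,
        extendStep_of_mem h.dist_self hv hv, h.dist_self _ hv, zero_add]

lemma step (h : IsTreeHitting E H d) :
    IsTreeHitting (stepYI μ E) (stepHit μ E H d) (stepDist E d) where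
  isHT := h.isHT_step
  connected := edgeConnected_stepYI h.connected
  card_verts := by
    rw [card_verts_stepYI, card_stepYI, h.card_verts]
    ring
  dist_self _ _ := if_pos rfl
  dist_of_adj _ _ := h.dist_of_adj_step
  sum_nbrs_dist u hu v hv huv := by
    rw [stepDist, sum_nbrs_extendStep (-1) h.dist_self
      (fun u hu v hv huv => by rw [h.sum_nbrs_dist u hu v hv huv]; ring)
      (fun v _ => by rw [h.sum_nbrs_dist_self]; ring) hu hv huv]
    ring
  sum_nbrs_hit_self _ := h.sum_nbrs_hit_self_step
  hit_add_swap _ hx _ hy := h.hit_add_swap_step hx hy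

end IsTreeHitting

lemma sum_sum_eq_mul_of_add_swap {α : Type*} {s : Finset α} {F G : α → α → ℝ} (c : ℝ)
    (h : ∀ u ∈ s, ∀ v ∈ s, F u v + F v u = c * (G u v + G v u)) :
    ∑ u ∈ s, ∑ v ∈ s, F u v = c * ∑ u ∈ s, ∑ v ∈ s, G u v := by
  have hsymm : ∀ K : α → α → ℝ,
      ∑ u ∈ s, ∑ v ∈ s, (K u v + K v u) = 2 * ∑ u ∈ s, ∑ v ∈ s, K u v := fun K => by
    simp only [sum_add_distrib, two_mul]
    exact congrArg _ sum_comm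
  have hF := hsymm F
  have hG := hsymm G
  rw [sum_congr rfl fun u hu => sum_congr rfl fun v hv => h u hu v hv] at hF
  simp only [← mul_sum] at hF
  linear_combination (c * hG - hF) / 2

lemma IsTreeHitting.sum_sum_hit {E : Finset (Sym2 ℕ)} {H d : ℕ → ℕ → ℝ}
    (h : IsTreeHitting E H d) :
    ∑ u ∈ verts E, ∑ v ∈ verts E, H u v = E.card * ∑ u ∈ verts E, ∑ v ∈ verts E, d u v :=
  sum_sum_eq_mul_of_add_swap _ h.hit_add_swap

lemma verts_edge : verts {s(0, 1)} = {0, 1} := by decide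

lemma nbrs_edge_zero : nbrs {s(0, 1)} 0 = {1} := by decide

lemma nbrs_edge_one : nbrs {s(0, 1)} 1 = {0} := by decide

lemma isTreeHitting_edge :
    IsTreeHitting {s(0, 1)} (fun u v => if u = v then 0 else 1) (fun u v => if u = v then 0 else 1)
    where
  isHT := by
    refine isHT_iff_sum_nbrs.2 ⟨fun v _ => if_pos rfl, fun u hu v hv huv => ?_⟩
    simp only [verts_edge, mem_insert, mem_singleton] at hu hv
    rcases hu with rfl | rfl <;> rcases hv with rfl | rfl <;>
      simp_all [nbrs_edge_zero, nbrs_edge_one, degE_eq_card_nbrs]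
  connected f hf x hx y hy := by
    have h01 := hf 0 1 (mem_singleton_self _)
    simp only [verts_edge, mem_insert, mem_singleton] at hx hy
    rcases hx with rfl | rfl <;> rcases hy with rfl | rfl <;> simp [h01]
  card_verts := by rw [verts_edge]; rfl
  dist_self _ _ := if_pos rfl
  dist_of_adj u w huw := by
    rcases Sym2.eq_iff.1 (mem_singleton.1 huw) with ⟨rfl, rfl⟩ | ⟨rfl, rfl⟩ <;> simp
  sum_nbrs_dist u hu v hv huv := by
    simp only [verts_edge, mem_insert, mem_singleton] at hu hv
    rcases hu with rfl | rfl <;> rcases hv with rfl | rfl <;>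
      simp_all [nbrs_edge_zero, nbrs_edge_one, degE_eq_card_nbrs] <;> norm_num
  sum_nbrs_hit_self v hv := by
    simp only [verts_edge, mem_insert, mem_singleton] at hv
    rcases hv with rfl | rfl <;> norm_num [nbrs_edge_zero, nbrs_edge_one, degE_eq_card_nbrs]
  hit_add_swap u _ v _ := by
    by_cases huv : u = v
    · simp [huv]
    · simp [huv, Ne.symm huv]

lemma YI_succ (μ t : ℕ) : YI μ (t + 1) = stepYI μ (YI μ t) := Function.iterate_succ_apply' _ _ _

lemma card_verts_YI (μ t : ℕ) : (verts (YI μ t)).card = 2 * (1 + μ) ^ t := by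
  induction t with
  | zero => rw [YI, Function.iterate_zero_apply, verts_edge]; rfl
  | succ t ih => rw [YI_succ, card_verts_stepYI, ih]; ring

lemma exists_isTreeHitting_YI (μ t : ℕ) : ∃ H d, IsTreeHitting (YI μ t) H d ∧
    (1 + μ) * ∑ u ∈ verts (YI μ t), ∑ v ∈ verts (YI μ t), d u v
      = 2 * (4 * μ * t + μ - 1) * (1 + μ) ^ (2 * t) + 4 * (1 + μ) ^ t := by
  induction t with
  | zero =>
    refine ⟨_, _, isTreeHitting_edge, ?_⟩
    simp [YI, verts_edge]
    ring
  | succ t ih =>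
    obtain ⟨H, d, h, hd⟩ := ih
    refine ⟨_, _, YI_succ μ t ▸ h.step, ?_⟩
    rw [YI_succ, stepDist, sum_sum_extendStep h.dist_self, card_verts_YI]
    push_cast
    linear_combination (1 + (μ : ℝ)) ^ 2 * hd

theorem mfpt_YI_general (μ : ℕ) (t : ℕ)
    (H : ℕ → ℕ → ℝ) (hH : IsHT (YI μ t) H) :
    (∑ u ∈ verts (YI μ t), ∑ v ∈ verts (YI μ t), H u v) /
        (((verts (YI μ t)).card : ℝ) * (((verts (YI μ t)).card : ℝ) - 1))
      = (4 * (μ : ℝ) * t + μ - 1) * ((1 : ℝ) + μ) ^ ((t : ℤ) - 1)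
          + 2 / (1 + (μ : ℝ)) := by
  obtain ⟨H₀, d, h, hd⟩ := exists_isTreeHitting_YI μ t
  have hn : ((verts (YI μ t)).card : ℝ) = 2 * (1 + μ) ^ t := by
    exact_mod_cast card_verts_YI μ t
  have hm : ((YI μ t).card : ℝ) = 2 * (1 + μ) ^ t - 1 := by
    rw [← hn, h.card_verts]
    push_cast
    ring
  have hsum : ∑ u ∈ verts (YI μ t), ∑ v ∈ verts (YI μ t), H u v
      = (2 * (1 + μ) ^ t - 1) * ∑ u ∈ verts (YI μ t), ∑ v ∈ verts (YI μ t), d u v := by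
    rw [← hm, ← h.sum_sum_hit]
    exact sum_congr rfl fun u hu => sum_congr rfl fun v hv => hH.unique h.connected h.isHT hu hv
  have hpos : (0 : ℝ) < 1 + μ := by positivity
  have hm_pos : (0 : ℝ) < 2 * (1 + μ) ^ t - 1 := by
    nlinarith [one_le_pow₀ (n := t) (by linarith : (1 : ℝ) ≤ 1 + μ)]
  rw [hsum, hn, zpow_sub₀ hpos.ne', zpow_natCast, zpow_one]
  field_simp
  linear_combination hd

/-- The mean first-passage time of the simple random walk on `Y_I(t)` equals
`(4μt + μ − 1)(1 + μ)^{t−1} + 2/(1 + μ)`. -/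
theorem mfpt_YI (μ : ℕ) (hμ : 1 ≤ μ) (t : ℕ)
    (H : ℕ → ℕ → ℝ) (hH : IsHT (YI μ t) H) :
    (∑ u ∈ verts (YI μ t), ∑ v ∈ verts (YI μ t), H u v) /
        (((verts (YI μ t)).card : ℝ) * (((verts (YI μ t)).card : ℝ) - 1))
      = (4 * (μ : ℝ) * t + μ - 1) * ((1 : ℝ) + μ) ^ ((t : ℤ) - 1)
          + 2 / (1 + (μ : ℝ)) :=
  mfpt_YI_general μ t H hH
end
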